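/- Let n and j be natural numbers, let Γ ≥ 0 and τ₀ > 0 be reals with 4Γτ₀·(n+j−1) < 1, and let μ : ℕ → ℝ be a sequence of nonnegative reals with μ_0 = 1 and μ_i ≤ i!·τ₀^i for all integers 1 ≤ i ≤ j+n−1. Then M_n[j] ≤ j!·Γ·τ₀^j / (1 − 4(j+n−1)Γτ₀)^{j+1}. -/

import Mathlib

/-- `M_n[j] := ∑_{k=1}^{n} ∑_{(q₁,…,q_k) ∈ W_k^{j+k-1}} ∏_{i=1}^{k} (Γ μ_{qᵢ})`,
summing over weak compositions of `j+k-1` into `k` parts (so `M_0[j] = 0`). -/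
noncomputable def Mker (Γ : ℝ) (μ : ℕ → ℝ) (n j : ℕ) : ℝ :=
  ∑ k ∈ Finset.Icc 1 n, ∑ q ∈ Finset.Nat.antidiagonalTuple k (j + k - 1),
    ∏ i : Fin k, (Γ * μ (q i))

/-!
Bounding `μ_q ≤ q! τ₀^q`, the `k`-th summand of `M_n[j]` is at most `Γ^k τ₀^m ∑ ∏ qᵢ!`, the sum
running over the weak compositions of `m = j+k-1` into `k` parts. Since `a! b! ≤ (a+b)! / 2^min(a,b)`,
`∑_{a+b=m} a! b! ≤ 4 m!`, and induction on the number of parts gives `∑ ∏ qᵢ! ≤ 4^(k-1) m!`.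
With `(j+k-1)! ≤ j! (j+n-1)^(k-1)` the `k`-th summand is at most `j! Γ τ₀^j x^(k-1)` for
`x = 4(j+n-1)Γτ₀ < 1`, and the geometric series sums to `j! Γ τ₀^j / (1-x) ≤ j! Γ τ₀^j / (1-x)^(j+1)`.
-/

open Finset Nat

theorem Finset.Nat.sum_antidiagonalTuple_succ {M : Type*} [AddCommMonoid M] (k n : ℕ)
    (f : (Fin (k + 1) → ℕ) → M) :
    ∑ q ∈ antidiagonalTuple (k + 1) n, f q =
      ∑ p ∈ antidiagonal n, ∑ r ∈ antidiagonalTuple k p.2, f (Fin.cons p.1 r) := by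
  rw [sum_sigma']
  refine sum_nbij' (fun q => ⟨(q 0, ∑ i : Fin k, q i.succ), Fin.tail q⟩)
    (fun p => Fin.cons p.1.1 p.2) ?_ ?_ ?_ ?_ ?_
  · intro q hq
    rw [mem_antidiagonalTuple] at hq
    simp [mem_antidiagonalTuple, ← hq, Fin.sum_univ_succ, Fin.tail]
  · rintro ⟨⟨a, b⟩, r⟩ hp
    simp_all [mem_antidiagonalTuple, Fin.sum_cons]
  · intro q _
    simp
  · rintro ⟨⟨a, b⟩, r⟩ hp
    simp_all [mem_antidiagonalTuple]
  · intro q _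
    simp

theorem Nat.two_pow_le_centralBinom (n : ℕ) : 2 ^ n ≤ centralBinom n := by
  induction n with
  | zero => simp
  | succ n ih =>
    refine Nat.le_of_mul_le_mul_left ?_ n.succ_pos
    rw [succ_mul_centralBinom_succ, pow_succ]
    nlinarith

theorem Nat.two_pow_min_le_choose_add (a b : ℕ) : 2 ^ min a b ≤ (a + b).choose a := by
  rcases le_total a b with h | h
  · rw [min_eq_left h]
    calc 2 ^ a ≤ centralBinom a := two_pow_le_centralBinom a
      _ = (a + a).choose a := by rw [centralBinom, two_mul]
      _ ≤ (a + b).choose a := choose_le_choose a (by omega)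
  · rw [min_eq_right h, choose_symm_add, add_comm]
    calc 2 ^ b ≤ centralBinom b := two_pow_le_centralBinom b
      _ = (b + b).choose b := by rw [centralBinom, two_mul]
      _ ≤ (b + a).choose b := choose_le_choose b (by omega)

theorem Nat.two_pow_min_mul_factorial_mul_factorial_le (a b : ℕ) :
    2 ^ min a b * (a ! * b !) ≤ (a + b)! := by
  rw [← add_choose_mul_factorial_mul_factorial a b, ← choose_symm_add, mul_assoc]
  exact Nat.mul_le_mul_right _ (two_pow_min_le_choose_add a b)

theorem Nat.sum_antidiagonal_factorial_mul_factorial_le (m : ℕ) :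
    ∑ p ∈ antidiagonal m, p.1 ! * p.2 ! ≤ 4 * m ! := by
  have hpair : ∀ p ∈ antidiagonal m,
      (p.1 ! * p.2 ! : ℝ) ≤ m ! * ((1 / 2) ^ p.1 + (1 / 2) ^ p.2) := by
    rintro ⟨a, b⟩ hab
    rw [HasAntidiagonal.mem_antidiagonal] at hab
    subst hab
    have h := two_pow_min_mul_factorial_mul_factorial_le a b
    have hhalf : ((1 : ℝ) / 2) ^ min a b ≤ (1 / 2) ^ a + (1 / 2) ^ b := by
      rcases min_choice a b with h | h <;> rw [h] <;> simp [pow_nonneg]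
    calc (a ! * b ! : ℝ) = (2 ^ min a b * (a ! * b !) : ℕ) * (1 / 2) ^ min a b := by
          push_cast; field_simp; rw [← mul_pow]; norm_num
      _ ≤ (a + b)! * ((1 / 2) ^ a + (1 / 2) ^ b) := by gcongr
  have hgeom : ∑ p ∈ antidiagonal m, ((1 : ℝ) / 2) ^ p.1 ≤ 2 := by
    rw [sum_antidiagonal_eq_sum_range_succ_mk]
    exact sum_geometric_two_le _
  have hgeom' : ∑ p ∈ antidiagonal m, ((1 : ℝ) / 2) ^ p.2 ≤ 2 := by
    rw [← sum_antidiagonal_swap]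
    exact hgeom
  suffices (∑ p ∈ antidiagonal m, p.1 ! * p.2 ! : ℝ) ≤ 4 * (m ! : ℝ) by exact_mod_cast this
  calc (∑ p ∈ antidiagonal m, p.1 ! * p.2 ! : ℝ)
      ≤ ∑ p ∈ antidiagonal m, (m ! : ℝ) * ((1 / 2) ^ p.1 + (1 / 2) ^ p.2) := sum_le_sum hpair
    _ = m ! * (∑ p ∈ antidiagonal m, ((1 : ℝ) / 2) ^ p.1
          + ∑ p ∈ antidiagonal m, ((1 : ℝ) / 2) ^ p.2) := by
      rw [← sum_add_distrib, mul_sum]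
    _ ≤ m ! * (2 + 2) := by gcongr
    _ = 4 * m ! := by ring

theorem Finset.Nat.sum_antidiagonalTuple_prod_factorial_le (k m : ℕ) :
    ∑ q ∈ antidiagonalTuple (k + 1) m, ∏ i, (q i)! ≤ 4 ^ k * m ! := by
  induction k generalizing m with
  | zero => simp
  | succ k ih =>
    rw [sum_antidiagonalTuple_succ]
    calc ∑ p ∈ antidiagonal m, ∑ r ∈ antidiagonalTuple (k + 1) p.2,
          ∏ i, ((Fin.cons p.1 r : Fin (k + 2) → ℕ) i)!
        = ∑ p ∈ antidiagonal m, p.1 ! * ∑ r ∈ antidiagonalTuple (k + 1) p.2, ∏ i, (r i)! := by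
          simp only [Fin.prod_univ_succ, Fin.cons_zero, Fin.cons_succ, mul_sum]
      _ ≤ ∑ p ∈ antidiagonal m, p.1 ! * (4 ^ k * p.2 !) := by gcongr; exact ih _
      _ = 4 ^ k * ∑ p ∈ antidiagonal m, p.1 ! * p.2 ! := by
          rw [mul_sum]; congr! 1; ring
      _ ≤ 4 ^ k * (4 * m !) := by gcongr; exact sum_antidiagonal_factorial_mul_factorial_le m
      _ = 4 ^ (k + 1) * m ! := by ring

theorem Nat.factorial_add_le_factorial_mul_pow (j s : ℕ) : (j + s)! ≤ j ! * (j + s) ^ s := by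
  rw [← factorial_mul_descFactorial (Nat.le_add_left s j), Nat.add_sub_cancel]
  exact Nat.mul_le_mul_left _ (descFactorial_le_pow _ _)

theorem prod_mul_le_pow_mul_prod_factorial {k m : ℕ} {Γ τ : ℝ} (hΓ : 0 ≤ Γ) {μ : ℕ → ℝ}
    (hμnonneg : ∀ i, 0 ≤ μ i) (hμ : ∀ i ≤ m, μ i ≤ i ! * τ ^ i) {q : Fin k → ℕ}
    (hq : q ∈ Finset.Nat.antidiagonalTuple k m) :
    ∏ i, Γ * μ (q i) ≤ Γ ^ k * τ ^ m * ∏ i, ((q i)! : ℝ) := by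
  rw [Finset.Nat.mem_antidiagonalTuple] at hq
  have hqm : ∀ i, q i ≤ m := fun i => hq ▸ single_le_sum (by simp) (mem_univ i)
  calc ∏ i, Γ * μ (q i) = Γ ^ k * ∏ i, μ (q i) := by simp [prod_mul_distrib]
    _ ≤ Γ ^ k * ∏ i, ((q i)! * τ ^ q i) := by
      gcongr with i
      · exact fun i _ => hμnonneg _
      · exact hμ _ (hqm i)
    _ = Γ ^ k * τ ^ m * ∏ i, ((q i)! : ℝ) := by
      rw [prod_mul_distrib, prod_pow_eq_pow_sum, hq]; ring

theorem sum_antidiagonalTuple_prod_mul_le {k m : ℕ} {Γ τ : ℝ} (hΓ : 0 ≤ Γ) (hτ : 0 ≤ τ)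
    {μ : ℕ → ℝ} (hμnonneg : ∀ i, 0 ≤ μ i) (hμ : ∀ i ≤ m, μ i ≤ i ! * τ ^ i) :
    ∑ q ∈ Finset.Nat.antidiagonalTuple (k + 1) m, ∏ i, Γ * μ (q i) ≤
      Γ ^ (k + 1) * τ ^ m * (4 ^ k * m !) := by
  calc ∑ q ∈ Finset.Nat.antidiagonalTuple (k + 1) m, ∏ i, Γ * μ (q i)
      ≤ ∑ q ∈ Finset.Nat.antidiagonalTuple (k + 1) m, Γ ^ (k + 1) * τ ^ m * ∏ i, ((q i)! : ℝ) :=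
        sum_le_sum fun q hq => prod_mul_le_pow_mul_prod_factorial hΓ hμnonneg hμ hq
    _ ≤ Γ ^ (k + 1) * τ ^ m * (4 ^ k * m !) := by
      rw [← mul_sum]
      gcongr
      exact_mod_cast Finset.Nat.sum_antidiagonalTuple_prod_factorial_le k m

theorem Mker_eq_sum_range (Γ : ℝ) (μ : ℕ → ℝ) (n j : ℕ) :
    Mker Γ μ n j = ∑ s ∈ range n,
      ∑ q ∈ Finset.Nat.antidiagonalTuple (s + 1) (j + s), ∏ i, Γ * μ (q i) := by
  rw [Mker, ← Ico_add_one_right_eq_Icc, sum_Ico_eq_sum_range]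
  refine sum_congr rfl fun s _ => ?_
  rw [add_comm 1 s, show j + (s + 1) - 1 = j + s by omega]

theorem sum_antidiagonalTuple_prod_mul_le_pow {n j s : ℕ} (hs : s < n) {Γ τ : ℝ} (hΓ : 0 ≤ Γ)
    (hτ : 0 ≤ τ) {μ : ℕ → ℝ} (hμnonneg : ∀ i, 0 ≤ μ i)
    (hμ : ∀ i ≤ j + n - 1, μ i ≤ i ! * τ ^ i) :
    ∑ q ∈ Finset.Nat.antidiagonalTuple (s + 1) (j + s), ∏ i, Γ * μ (q i) ≤
      j ! * Γ * τ ^ j * (4 * ((j : ℝ) + n - 1) * Γ * τ) ^ s := by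
  have hjn : ((j + n - 1 : ℕ) : ℝ) = j + n - 1 := by
    rw [Nat.cast_sub (by omega)]; push_cast; ring
  have hfact : ((j + s)! : ℝ) ≤ j ! * (j + n - 1 : ℕ) ^ s := by
    exact_mod_cast (factorial_add_le_factorial_mul_pow j s).trans
      (Nat.mul_le_mul_left _ (Nat.pow_le_pow_left (by omega) s))
  calc _ ≤ Γ ^ (s + 1) * τ ^ (j + s) * (4 ^ s * (j + s)!) :=
        sum_antidiagonalTuple_prod_mul_le hΓ hτ hμnonneg fun i hi => hμ i (by omega)
    _ ≤ Γ ^ (s + 1) * τ ^ (j + s) * (4 ^ s * (j ! * (j + n - 1 : ℕ) ^ s)) := by gcongr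
    _ = j ! * Γ * τ ^ j * (4 * ((j : ℝ) + n - 1) * Γ * τ) ^ s := by
      rw [hjn, mul_pow, mul_pow, mul_pow]; ring

theorem geom_sum_le_one_div_one_sub_pow {K : Type*} [Field K] [LinearOrder K]
    [IsStrictOrderedRing K] {x : K} (hx0 : 0 ≤ x) (hx1 : x < 1) (n j : ℕ) :
    ∑ s ∈ range n, x ^ s ≤ 1 / (1 - x) ^ (j + 1) :=
  calc ∑ s ∈ range n, x ^ s ≤ x ^ 0 / (1 - x) := by
        rw [range_eq_Ico]; exact geom_sum_Ico_le_of_lt_one hx0 hx1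
    _ ≤ 1 / (1 - x) ^ (j + 1) := by
      rw [pow_zero]
      gcongr
      exact pow_le_of_le_one (sub_nonneg.2 hx1.le) (by linarith) (by omega)

/-- If `Γ ≥ 0`, `τ₀ > 0`, `4Γτ₀(n+j-1) < 1`, and `μ` is nonnegative
with `μ 0 = 1` and `μ i ≤ i! τ₀^i` for `1 ≤ i ≤ j+n-1`, then
`M_n[j] ≤ j! Γ τ₀^j / (1 - 4(j+n-1)Γτ₀)^{j+1}`. -/
theorem Mker_le_closed (n j : ℕ) (Γ τ₀ : ℝ) (hΓ : 0 ≤ Γ) (hτ : 0 < τ₀)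
    (hsmall : 4 * Γ * τ₀ * ((n : ℝ) + j - 1) < 1)
    (μ : ℕ → ℝ) (hμ0 : μ 0 = 1) (hμnonneg : ∀ i, 0 ≤ μ i)
    (hμ : ∀ i, 1 ≤ i → i ≤ j + n - 1 → μ i ≤ i.factorial * τ₀ ^ i) :
    Mker Γ μ n j ≤ j.factorial * Γ * τ₀ ^ j /
      (1 - 4 * ((j : ℝ) + n - 1) * Γ * τ₀) ^ (j + 1) := by
  set x := 4 * ((j : ℝ) + n - 1) * Γ * τ₀
  have hx1 : x < 1 := by linarith
  obtain rfl | hn := n.eq_zero_or_pos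
  · simp only [Mker, Icc_eq_empty_of_lt one_pos, sum_empty]
    have : 0 < 1 - x := by linarith
    positivity
  have hx0 : 0 ≤ x := by
    have : (1 : ℝ) ≤ n := by exact_mod_cast hn
    have : (0 : ℝ) ≤ j + n - 1 := by linarith [j.cast_nonneg (α := ℝ)]
    positivity
  have hμ' : ∀ i ≤ j + n - 1, μ i ≤ i ! * τ₀ ^ i := by
    intro i hi
    rcases i.eq_zero_or_pos with rfl | hi0
    · simp [hμ0]
    · exact hμ i hi0 hi
  calc Mker Γ μ n j ≤ ∑ s ∈ range n, j ! * Γ * τ₀ ^ j * x ^ s := by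
        rw [Mker_eq_sum_range]
        exact sum_le_sum fun s hs =>
          sum_antidiagonalTuple_prod_mul_le_pow (mem_range.1 hs) hΓ hτ.le hμnonneg hμ'
    _ = j ! * Γ * τ₀ ^ j * ∑ s ∈ range n, x ^ s := (mul_sum ..).symm
    _ ≤ j ! * Γ * τ₀ ^ j * (1 / (1 - x) ^ (j + 1)) := by
      gcongr; exact geom_sum_le_one_div_one_sub_pow hx0 hx1 n j
    _ = j ! * Γ * τ₀ ^ j / (1 - x) ^ (j + 1) := by ring
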